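/- Let L be a finite lattice in which μ(x,y) ≠ 0 for all x ≤ y. Then every family F ⊆ L shatters at least |F| elements, i.e., |Str(F)| ≥ |F|, where Str(F) = {z ∈ L : F shatters z}. -/

import Mathlib

open scoped Classical

/-- `F` shatters `z`: for every `x ≤ z` there is `w ∈ F` with `w ⊓ z = x`. -/
def Shatters {L : Type*} [SemilatticeInf L] (F : Set L) (z : L) : Prop :=
  ∀ x ≤ z, ∃ w ∈ F, w ⊓ z = x

/-- The set of elements shattered by `F`. -/
def Str {L : Type*} [SemilatticeInf L] (F : Set L) : Set L := {z | Shatters F z}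


/-- The Möbius function of a finite poset. -/
noncomputable def mu {L : Type*} [PartialOrder L] [Fintype L] (x y : L) : ℚ :=
  if x = y then 1
  else if x ≤ y then
    - ∑ z ∈ (Finset.univ.filter fun z => x ≤ z ∧ z < y).attach, mu x z.1
  else 0
termination_by (Finset.univ.filter fun z : L => z < y).card
decreasing_by
  · have hz := (Finset.mem_filter.mp z.2).2.2
    apply Finset.card_lt_card
    constructor
    · intro w hw
      simp only [Finset.mem_filter, Finset.mem_univ, true_and] at hw ⊢
      exact hw.trans hz
    · intro hsub
      have hmem : z.1 ∈ Finset.univ.filter fun w : L => w < y := by simp [hz]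
      have := hsub hmem
      simp at this

/-!
For `g : F → ℚ` let `h = sumAbove g`, i.e. `h t = ∑_{w ∈ F, t ≤ w} g w`. Möbius inversion over
`[x, z]` gives `∑_{w ⊓ z = x} g w = μ(x, z) h(z)` whenever `h` vanishes strictly below `z`, so a
minimal point of the support of `h` is shattered. Hence `h` cannot vanish on `Str F` unless it
vanishes everywhere, and then `g = 0` (the vectors `t ↦ [t ≤ w]` are triangular). Thus the vectors
`z ↦ [z ≤ w]` on `Str F`, `w ∈ F`, are linearly independent.
-/

section PartialOrder

variable {L : Type*} [PartialOrder L] [Fintype L]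

attribute [local instance] Fintype.toLocallyFiniteOrder

lemma mu_self (x : L) : mu x x = 1 := by
  rw [mu, if_pos rfl]

lemma mu_of_lt {x y : L} (h : x < y) : mu x y = -∑ z ∈ Finset.Ico x y, mu x z := by
  rw [mu, if_neg h.ne, if_pos h.le, Finset.sum_attach]
  congr 1
  exact Finset.sum_congr (by ext; simp) fun _ _ => rfl

lemma sum_Icc_mu (x y : L) : ∑ z ∈ Finset.Icc x y, mu x z = if x = y then 1 else 0 := by
  by_cases hxy : x ≤ y
  · rcases hxy.eq_or_lt with rfl | hlt
    · simp [mu_self]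
    · rw [← Finset.Ico_insert_right hlt.le, Finset.sum_insert Finset.right_notMem_Ico,
        mu_of_lt hlt, if_neg hlt.ne, neg_add_cancel]
  · rw [Finset.Icc_eq_empty hxy, Finset.sum_empty, if_neg (fun h => hxy h.le)]

noncomputable def sumAbove {F : Set L} (g : F → ℚ) (t : L) : ℚ :=
  ∑ w : F, g w * if t ≤ (w : L) then 1 else 0

lemma eq_zero_of_sumAbove_eq_zero {F : Set L} {g : F → ℚ} (h : ∀ t, sumAbove g t = 0)
    (w : F) : g w = 0 := by
  induction w using WellFoundedGT.induction with
  | ind w ih =>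
    have hsum : sumAbove g w = g w := by
      refine (Finset.sum_eq_single w (fun w' _ hne => ?_) (by simp)).trans (by simp)
      by_cases hle : (w : L) ≤ w'
      · rw [ih w' (lt_of_le_of_ne (show w ≤ w' from hle) hne.symm), zero_mul]
      · rw [if_neg hle, mul_zero]
    rw [← hsum, h]

end PartialOrder

section Lattice

variable {L : Type*} [Lattice L] [Fintype L]

attribute [local instance] Fintype.toLocallyFiniteOrder

lemma sum_Icc_mu_mul_indicator_le (x z a : L) :
    ∑ y ∈ Finset.Icc x z, mu x y * (if y ≤ a then 1 else 0) = if x = a ⊓ z then 1 else 0 := by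
  simp_rw [mul_ite, mul_one, mul_zero]
  rw [← Finset.sum_filter]
  have hIcc : (Finset.Icc x z).filter (· ≤ a) = Finset.Icc x (a ⊓ z) := by
    ext y; simp only [Finset.mem_filter, Finset.mem_Icc, le_inf_iff]; tauto
  rw [hIcc, sum_Icc_mu]

variable {F : Set L}

lemma sum_Icc_mu_mul_sumAbove (g : F → ℚ) (x z : L) :
    ∑ y ∈ Finset.Icc x z, mu x y * sumAbove g y
      = ∑ w : F, g w * if x = (w : L) ⊓ z then 1 else 0 := by
  simp_rw [sumAbove, Finset.mul_sum, ← sum_Icc_mu_mul_indicator_le]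
  rw [Finset.sum_comm]
  refine Finset.sum_congr rfl fun w _ => ?_
  rw [Finset.mul_sum]
  exact Finset.sum_congr rfl fun y _ => by ring

lemma mem_Str_of_sumAbove_ne_zero_of_lt (hmu : ∀ x y : L, x ≤ y → mu x y ≠ 0) {g : F → ℚ}
    {z : L} (hz : sumAbove g z ≠ 0) (hlt : ∀ y < z, sumAbove g y = 0) : z ∈ Str F := by
  intro x hxz
  have hsum : ∑ y ∈ Finset.Icc x z, mu x y * sumAbove g y = mu x z * sumAbove g z := by
    refine Finset.sum_eq_single_of_mem z (Finset.right_mem_Icc.mpr hxz) fun y hy hne => ?_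
    rw [hlt y (lt_of_le_of_ne (Finset.mem_Icc.mp hy).2 hne), mul_zero]
  have hne : ∑ w : F, g w * (if x = (w : L) ⊓ z then 1 else 0) ≠ 0 := by
    rw [← sum_Icc_mu_mul_sumAbove, hsum]
    exact mul_ne_zero (hmu x z hxz) hz
  obtain ⟨w, -, hw⟩ := Finset.exists_ne_zero_of_sum_ne_zero hne
  exact ⟨w, w.2, by_contra fun h => hw (by rw [if_neg (Ne.symm h), mul_zero])⟩

lemma sumAbove_eq_zero_of_forall_mem_Str (hmu : ∀ x y : L, x ≤ y → mu x y ≠ 0) {g : F → ℚ}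
    (h : ∀ z ∈ Str F, sumAbove g z = 0) (t : L) : sumAbove g t = 0 := by
  induction t using WellFoundedLT.induction with
  | ind t ih => exact by_contra fun ht => ht (h t (mem_Str_of_sumAbove_ne_zero_of_lt hmu ht ih))

end Lattice

/-- SSP lemma: a finite lattice with nonvanishing Möbius function is SSP:
every family shatters at least as many elements as its cardinality. -/
theorem ssp_of_mu_nonvanishing {L : Type*} [Lattice L] [Fintype L]
    (hmu : ∀ x y : L, x ≤ y → mu x y ≠ 0) (F : Set L) :
    F.ncard ≤ (Str F).ncard := by
  have hli : LinearIndependent ℚ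
      fun (w : F) (z : Str F) => if (z : L) ≤ (w : L) then (1 : ℚ) else 0 := by
    refine Fintype.linearIndependent_iff.mpr fun g hg => eq_zero_of_sumAbove_eq_zero ?_
    refine sumAbove_eq_zero_of_forall_mem_Str hmu fun z hz => ?_
    simpa [sumAbove, Finset.sum_apply] using congrFun hg ⟨z, hz⟩
  simpa [← Nat.card_coe_set_eq, Nat.card_eq_fintype_card] using hli.fintype_card_le_finrank
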